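/- arXiv:1904.03533 — 4 statements merged into one kernel-verified Lean document; each statement's English description precedes it below -/
import Mathlib

section
/- Let X be a finite connected k-regular graph (k ≥ 3) on at least two vertices, let A be its adjacency matrix, let λ₁(X) = max{λ : λ is an eigenvalue of A and λ ≠ k}, and let h(X) be its Cheeger constant. Then h(X)²/(2k) ≤ k − λ₁(X) ≤ 2·h(X). -/
/-!
Write `L = k • 1 - A` for the Laplacian of the `k`-regular graph, so that `x ⬝ᵥ L x` is half the
sum of `(x u - x v)²` over ordered pairs of adjacent vertices. Since the `k`-eigenvectors of `A`
are the constants (by connectivity), expanding in an eigenbasis gives `(k - λ₁) ‖x‖² ≤ x ⬝ᵥ L x`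
whenever `∑ x = 0`; testing this on the centred indicator of `Y` gives `k - λ₁ ≤ 2 |∂Y| / |Y|`.

Conversely, let `f` be a `λ₁`-eigenvector, replaced by `-f` if needed so that `g = f⁺` is
supported on at most half of the vertices. Then `g ⬝ᵥ L g ≤ (k - λ₁) ‖g‖²`. Peeling off the level
sets of `g²` one at a time (a discrete coarea formula) gives `2 h ‖g‖² ≤ ∑ |g u² - g v²|`, and
Cauchy–Schwarz with `|a² - b²| = |a - b| |a + b|` bounds this by `√(2 (g ⬝ᵥ L g) · 4 k ‖g‖²)`.
-/

open Matrix Finset SimpleGraph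

namespace OrthonormalBasis

variable {ι n : Type*} [Fintype ι] [Fintype n]

theorem dotProduct_eq_sum (b : OrthonormalBasis ι ℝ (EuclideanSpace ℝ n)) (x y : n → ℝ) :
    x ⬝ᵥ y = ∑ i, (⇑(b i) ⬝ᵥ x) * (⇑(b i) ⬝ᵥ y) := by
  have := b.sum_inner_mul_inner (WithLp.toLp 2 x) (WithLp.toLp 2 y)
  simp only [EuclideanSpace.inner_eq_star_dotProduct, star_trivial] at this
  rw [dotProduct_comm, ← this]
  simp only [dotProduct_comm y]

end OrthonormalBasis

namespace Matrix.IsHermitian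

variable {n : Type*} [Fintype n] [DecidableEq n] {A : Matrix n n ℝ}

theorem dotProduct_mulVec_eigenvectorBasis (hA : A.IsHermitian) (i : n) (x : n → ℝ) :
    ⇑(hA.eigenvectorBasis i) ⬝ᵥ (A *ᵥ x) = hA.eigenvalues i * (⇑(hA.eigenvectorBasis i) ⬝ᵥ x) := by
  rw [dotProduct_mulVec, ← mulVec_transpose, ← conjTranspose_eq_transpose_of_trivial, hA.eq,
    mulVec_eigenvectorBasis, smul_dotProduct, smul_eq_mul]

theorem exists_eigenvector_dotProduct_ne_zero (hA : A.IsHermitian) {x : n → ℝ} (hx : x ≠ 0) :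
    ∃ (μ : ℝ) (v : n → ℝ), A *ᵥ v = μ • v ∧ v ⬝ᵥ x ≠ 0 := by
  by_contra! h
  refine hx (dotProduct_self_eq_zero.mp ?_)
  rw [hA.eigenvectorBasis.dotProduct_eq_sum]
  simp [h _ _ (hA.mulVec_eigenvectorBasis _)]

theorem dotProduct_mulVec_le {μ : ℝ} (hA : A.IsHermitian) {x : n → ℝ}
    (hx : ∀ (ν : ℝ) (v : n → ℝ), A *ᵥ v = ν • v → μ < ν → v ⬝ᵥ x = 0) :
    x ⬝ᵥ (A *ᵥ x) ≤ μ * (x ⬝ᵥ x) := by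
  rw [hA.eigenvectorBasis.dotProduct_eq_sum, hA.eigenvectorBasis.dotProduct_eq_sum, mul_sum]
  refine sum_le_sum fun i _ => ?_
  rw [dotProduct_mulVec_eigenvectorBasis]
  rcases le_or_gt (hA.eigenvalues i) μ with hle | hlt
  · nlinarith [mul_self_nonneg (⇑(hA.eigenvectorBasis i) ⬝ᵥ x)]
  · simp [hx _ _ (hA.mulVec_eigenvectorBasis i) hlt]

end Matrix.IsHermitian

namespace SimpleGraph

variable {V : Type*} [Fintype V] {G : SimpleGraph V} [DecidableRel G.Adj]

section dartSum

variable (G) in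
def dartSum (F : V → V → ℝ) : ℝ :=
  ∑ p ∈ ({p | G.Adj p.1 p.2} : Finset (V × V)), F p.1 p.2

theorem dartSum_eq_sum_sum_ite (F : V → V → ℝ) :
    G.dartSum F = ∑ u, ∑ v, if G.Adj u v then F u v else 0 := by
  rw [dartSum, sum_filter, ← Fintype.sum_prod_type']

theorem dartSum_le_dartSum {F F' : V → V → ℝ} (h : ∀ u v, G.Adj u v → F u v ≤ F' u v) :
    G.dartSum F ≤ G.dartSum F' :=
  sum_le_sum fun p hp => h p.1 p.2 (mem_filter.mp hp).2

theorem dartSum_nonneg {F : V → V → ℝ} (h : ∀ u v, G.Adj u v → 0 ≤ F u v) :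
    0 ≤ G.dartSum F :=
  sum_nonneg fun p hp => h p.1 p.2 (mem_filter.mp hp).2

theorem dartSum_add (F F' : V → V → ℝ) :
    G.dartSum (fun u v => F u v + F' u v) = G.dartSum F + G.dartSum F' :=
  sum_add_distrib

theorem dartSum_swap (F : V → V → ℝ) : G.dartSum (fun u v => F v u) = G.dartSum F := by
  simp only [dartSum_eq_sum_sum_ite]
  rw [sum_comm]
  simp only [G.adj_comm]

theorem dartSum_mul_sq_le_sq_mul_sq (F F' : V → V → ℝ) :
    G.dartSum (fun u v => F u v * F' u v) ^ 2 ≤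
      G.dartSum (fun u v => F u v ^ 2) * G.dartSum (fun u v => F' u v ^ 2) :=
  sum_mul_sq_le_sq_mul_sq _ _ _

theorem IsRegularOfDegree.dartSum_eq_mul_sum {k : ℕ} (hreg : G.IsRegularOfDegree k)
    (φ : V → ℝ) : G.dartSum (fun u _ => φ u) = k * ∑ v, φ v := by
  simp only [dartSum_eq_sum_sum_ite, mul_sum, ← sum_filter]
  refine sum_congr rfl fun u _ => ?_
  rw [sum_const, nsmul_eq_mul, ← neighborFinset_eq_filter, card_neighborFinset_eq_degree, hreg u]

end dartSum

variable (G) in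
def nontrivialEigenvalues (k : ℕ) : Set ℝ :=
  {μ : ℝ | μ ≠ (k : ℝ) ∧ ∃ x : V → ℝ, x ≠ 0 ∧ G.adjMatrix ℝ *ᵥ x = μ • x}

variable [DecidableEq V]

variable (G) in
def edgeBoundaryCard (Y : Finset V) : ℕ :=
  #{p : V × V | p.1 ∈ Y ∧ p.2 ∉ Y ∧ G.Adj p.1 p.2}

theorem dartSum_ite_mem_and_notMem (Y : Finset V) (c : ℝ) :
    G.dartSum (fun u v => if u ∈ Y ∧ v ∉ Y then c else 0) = c * G.edgeBoundaryCard Y := by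
  rw [dartSum, sum_ite, sum_const_zero, add_zero, sum_const, nsmul_eq_mul, filter_filter, mul_comm,
    edgeBoundaryCard]
  congr 3
  ext p
  simp only [mem_filter, mem_univ, true_and]
  tauto

theorem dartSum_ite_mem_iff (Y : Finset V) (c : ℝ) :
    G.dartSum (fun u v => if (u ∈ Y ↔ v ∈ Y) then 0 else c) = 2 * c * G.edgeBoundaryCard Y := by
  have hsplit : ∀ u v, (if (u ∈ Y ↔ v ∈ Y) then 0 else c) =
      (if u ∈ Y ∧ v ∉ Y then c else 0) + (if v ∈ Y ∧ u ∉ Y then c else 0) := by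
    intro u v
    by_cases hu : u ∈ Y <;> by_cases hv : v ∈ Y <;> simp [hu, hv]
  have hswap := dartSum_swap (G := G) (fun u v => if u ∈ Y ∧ v ∉ Y then c else 0)
  simp only [hsplit, dartSum_add, hswap, dartSum_ite_mem_and_notMem]
  ring

variable (G) in
theorem dotProduct_lapMatrix_mulVec (x : V → ℝ) :
    x ⬝ᵥ (G.lapMatrix ℝ *ᵥ x) = G.dartSum (fun u v => (x u - x v) ^ 2) / 2 := by
  rw [← toLinearMap₂'_apply', lapMatrix_toLinearMap₂', dartSum_eq_sum_sum_ite]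

variable (G) in
theorem dotProduct_lapMatrix_mulVec_nonneg (x : V → ℝ) : 0 ≤ x ⬝ᵥ (G.lapMatrix ℝ *ᵥ x) := by
  simpa using (posSemidef_lapMatrix ℝ G).dotProduct_mulVec_nonneg x

theorem lapMatrix_mulVec_of_isRegularOfDegree {k : ℕ} (hreg : G.IsRegularOfDegree k)
    (x : V → ℝ) :
    G.lapMatrix ℝ *ᵥ x = (k : ℝ) • x - G.adjMatrix ℝ *ᵥ x := by
  rw [lapMatrix, sub_mulVec]
  congr 1
  ext v
  simp [degMatrix_mulVec_apply, hreg v]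

theorem lapMatrix_mulVec_eq_iff_adjMatrix_mulVec_eq {k : ℕ} (hreg : G.IsRegularOfDegree k)
    {x : V → ℝ} {μ : ℝ} :
    G.lapMatrix ℝ *ᵥ x = ((k : ℝ) - μ) • x ↔ G.adjMatrix ℝ *ᵥ x = μ • x := by
  rw [lapMatrix_mulVec_of_isRegularOfDegree hreg, sub_smul, sub_right_inj]

theorem Connected.eq_of_adjMatrix_mulVec_eq {k : ℕ} (hconn : G.Connected)
    (hreg : G.IsRegularOfDegree k) {x : V → ℝ} (hx : G.adjMatrix ℝ *ᵥ x = (k : ℝ) • x)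
    (u v : V) : x u = x v := by
  rw [← lapMatrix_mulVec_eq_iff_adjMatrix_mulVec_eq hreg, sub_self, zero_smul,
    lapMatrix_mulVec_eq_zero_iff_forall_reachable] at hx
  exact hx u v (hconn.preconnected u v)

theorem sum_eq_zero_of_adjMatrix_mulVec_eq {k : ℕ} (hreg : G.IsRegularOfDegree k) {x : V → ℝ}
    {μ : ℝ} (hx : G.adjMatrix ℝ *ᵥ x = μ • x) (hμ : μ ≠ k) : ∑ v, x v = 0 := by
  rw [← lapMatrix_mulVec_eq_iff_adjMatrix_mulVec_eq hreg] at hx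
  have h := congrArg (fun y => (fun _ => (1 : ℝ)) ⬝ᵥ y) hx
  simp only [dotProduct_mulVec, ← mulVec_transpose, (isSymm_lapMatrix ℝ G).eq,
    lapMatrix_mulVec_const_eq_zero, dotProduct_smul, smul_eq_mul] at h
  simpa [sub_ne_zero.2 hμ.symm, dotProduct] using h.symm

theorem nontrivialEigenvalues_finite (k : ℕ) : (G.nontrivialEigenvalues k).Finite := by
  refine (G.adjMatrix ℝ).finite_spectrum.subset fun μ ⟨_, x, hx0, hx⟩ => ?_
  rw [← spectrum_toLin']
  exact Module.End.HasEigenvalue.mem_spectrum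
    (Module.End.hasEigenvalue_of_hasEigenvector ⟨Module.End.mem_eigenspace_iff.2 hx, hx0⟩)

theorem nontrivialEigenvalues_nonempty {k : ℕ} (hconn : G.Connected)
    (hreg : G.IsRegularOfDegree k) (hcard : 2 ≤ Fintype.card V) :
    (G.nontrivialEigenvalues k).Nonempty := by
  obtain ⟨u, w, huw⟩ := Fintype.exists_pair_of_one_lt_card hcard
  set x : V → ℝ := Pi.single u 1 - Pi.single w 1
  have hx0 : x ≠ 0 := fun hx => by simpa [x, huw] using congrFun hx u
  obtain ⟨μ, y, hy, hyx⟩ := (isHermitian_adjMatrix ℝ G).exists_eigenvector_dotProduct_ne_zero hx0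
  refine ⟨μ, fun hμ => hyx ?_, y, fun hy0 => hyx (by simp [hy0]), hy⟩
  subst hμ
  simp [x, hconn.eq_of_adjMatrix_mulVec_eq hreg hy w u]

theorem sub_sSup_nontrivialEigenvalues_mul_le {k : ℕ} (hconn : G.Connected)
    (hreg : G.IsRegularOfDegree k) {x : V → ℝ} (hx : ∑ v, x v = 0) :
    ((k : ℝ) - sSup (G.nontrivialEigenvalues k)) * (x ⬝ᵥ x) ≤ x ⬝ᵥ (G.lapMatrix ℝ *ᵥ x) := by
  have horth : ∀ (ν : ℝ) (y : V → ℝ), G.adjMatrix ℝ *ᵥ y = ν • y →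
      sSup (G.nontrivialEigenvalues k) < ν → y ⬝ᵥ x = 0 := by
    intro ν y hy hν
    by_cases hy0 : y = 0
    · simp [hy0]
    have hνk : ν = k := by
      by_contra hνk
      exact hν.not_ge (le_csSup (nontrivialEigenvalues_finite k).bddAbove ⟨hνk, y, hy0, hy⟩)
    subst hνk
    obtain ⟨v₀⟩ := hconn.nonempty
    simp [dotProduct, hconn.eq_of_adjMatrix_mulVec_eq hreg hy _ v₀, ← mul_sum, hx]
  have hA := (isHermitian_adjMatrix ℝ G).dotProduct_mulVec_le horth
  rw [lapMatrix_mulVec_of_isRegularOfDegree hreg, dotProduct_sub, dotProduct_smul, smul_eq_mul]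
  linarith

variable (G) in
noncomputable def cheegerConstant : ℝ :=
  sInf {r : ℝ | ∃ Y : Finset V, Y.Nonempty ∧ 2 * #Y ≤ Fintype.card V ∧
    r = G.edgeBoundaryCard Y / #Y}

theorem cheegerConstant_nonneg : 0 ≤ G.cheegerConstant :=
  Real.sInf_nonneg fun _ ⟨_, _, _, hr⟩ => hr ▸ by positivity

theorem cheegerConstant_mul_card_le {Y : Finset V} (hY : Y.Nonempty)
    (hY2 : 2 * #Y ≤ Fintype.card V) : G.cheegerConstant * #Y ≤ G.edgeBoundaryCard Y := by
  rw [← le_div_iff₀ (by simpa using hY.card_pos)]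
  exact csInf_le ⟨0, fun _ ⟨_, _, _, hr⟩ => hr ▸ by positivity⟩ ⟨Y, hY, hY2, rfl⟩

theorem le_cheegerConstant (hcard : 2 ≤ Fintype.card V) {c : ℝ}
    (hc : ∀ Y : Finset V, Y.Nonempty → 2 * #Y ≤ Fintype.card V → c * #Y ≤ G.edgeBoundaryCard Y) :
    c ≤ G.cheegerConstant := by
  obtain ⟨v⟩ : Nonempty V := Fintype.card_pos_iff.1 (by omega)
  refine le_csInf ⟨_, {v}, singleton_nonempty v, by simpa using hcard, rfl⟩ ?_
  rintro _ ⟨Y, hY, hY2, rfl⟩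
  rw [le_div_iff₀ (by simpa using hY.card_pos)]
  exact hc Y hY hY2

theorem mul_card_le_two_mul_edgeBoundaryCard {γ : ℝ}
    (hgap : ∀ x : V → ℝ, ∑ v, x v = 0 → γ * (x ⬝ᵥ x) ≤ x ⬝ᵥ (G.lapMatrix ℝ *ᵥ x))
    {Y : Finset V} (hY : Y.Nonempty) (hY2 : 2 * #Y ≤ Fintype.card V) :
    γ * #Y ≤ 2 * G.edgeBoundaryCard Y := by
  set n : ℝ := (Fintype.card V : ℝ)
  set y : ℝ := (#Y : ℝ)
  set x : V → ℝ := fun v => n * (if v ∈ Y then 1 else 0) - y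
  have hind : ∑ v, (if v ∈ Y then (1 : ℝ) else 0) = y := by simp [y]
  have hsum : ∑ v, x v = 0 := by
    simp only [x, sum_sub_distrib, ← mul_sum, hind, sum_const, card_univ, nsmul_eq_mul]
    ring
  have hxx : x ⬝ᵥ x = n * y * (n - y) := by
    have hsq : ∀ v, x v * x v = (n ^ 2 - 2 * n * y) * (if v ∈ Y then 1 else 0) + y ^ 2 := by
      intro v
      by_cases hv : v ∈ Y <;> simp only [x, hv, if_true, if_false] <;> ring
    simp only [dotProduct, hsq, sum_add_distrib, ← mul_sum, hind, sum_const, card_univ,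
      nsmul_eq_mul]
    ring
  have hxLx : x ⬝ᵥ (G.lapMatrix ℝ *ᵥ x) = n ^ 2 * G.edgeBoundaryCard Y := by
    have hdiff : ∀ u v, (x u - x v) ^ 2 = if (u ∈ Y ↔ v ∈ Y) then 0 else n ^ 2 := by
      intro u v
      by_cases hu : u ∈ Y <;> by_cases hv : v ∈ Y <;> simp [x, hu, hv]
      ring
    simp only [dotProduct_lapMatrix_mulVec, hdiff, dartSum_ite_mem_iff]
    ring
  have hkey := hgap x hsum
  rw [hxx, hxLx] at hkey
  have hy : 0 < y := by simp [y, hY.card_pos]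
  have hyn : 2 * y ≤ n := by simp only [n, y]; exact_mod_cast hY2
  have hB : (0 : ℝ) ≤ G.edgeBoundaryCard Y := Nat.cast_nonneg _
  have hdiv : γ * y * (n - y) ≤ n * G.edgeBoundaryCard Y := by nlinarith
  nlinarith

theorem dartSum_abs_sub_eq_add_of_le {φ : V → ℝ} (hφ : 0 ≤ φ) {S : Finset V} {m : ℝ}
    (hS : ∀ v ∉ S, φ v = 0) (hm : ∀ v ∈ S, m ≤ φ v) :
    G.dartSum (fun u v => |φ u - φ v|) = 2 * m * G.edgeBoundaryCard S +
      G.dartSum (fun u v => |(φ u - if u ∈ S then m else 0) - (φ v - if v ∈ S then m else 0)|) := by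
  rw [← dartSum_ite_mem_iff, ← dartSum_add]
  congr 1
  ext u v
  by_cases hu : u ∈ S <;> by_cases hv : v ∈ S
  · simp [hu, hv]
  · simp [hu, hv, hS v hv, abs_of_nonneg (hφ u), abs_of_nonneg (sub_nonneg.2 (hm u hu))]
  · simp [hu, hv, hS u hu, abs_of_nonneg (hφ v), abs_sub_comm m (φ v),
      abs_of_nonneg (sub_nonneg.2 (hm v hv))]
  · simp [hu, hv, hS u hu, hS v hv]

theorem two_mul_mul_sum_le_dartSum_abs_sub {h : ℝ} (s : Finset V)
    (hs : ∀ Y ⊆ s, Y.Nonempty → h * #Y ≤ G.edgeBoundaryCard Y)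
    {φ : V → ℝ} (hφ : 0 ≤ φ) (hφs : ∀ v ∉ s, φ v = 0) :
    2 * h * ∑ v, φ v ≤ G.dartSum (fun u v => |φ u - φ v|) := by
  induction s using Finset.strongInduction generalizing φ with
  | H s ih =>
  set S := {v ∈ s | 0 < φ v}
  have hφS : ∀ v ∉ S, φ v = 0 := fun v hv => by
    by_cases hvs : v ∈ s
    · exact le_antisymm (not_lt.mp fun h => hv (mem_filter.mpr ⟨hvs, h⟩)) (hφ v)
    · exact hφs v hvs
  rcases S.eq_empty_or_nonempty with hS | hS
  · have hφ0 : ∀ v, φ v = 0 := fun v => hφS v (by simp [hS])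
    simp only [hφ0, sum_const_zero, mul_zero, sub_zero, abs_zero]
    exact dartSum_nonneg fun _ _ _ => le_rfl
  -- Peel off the bottom layer `m • 1_S` of `φ`; what remains vanishes at the minimiser `v₀`.
  obtain ⟨v₀, hv₀S, hm⟩ := S.exists_min_image φ hS
  set m := φ v₀
  set ψ : V → ℝ := fun v => φ v - if v ∈ S then m else 0
  have hψ : 0 ≤ ψ := fun v => by
    by_cases hv : v ∈ S
    · simpa [ψ, hv] using hm v hv
    · simp [ψ, hv, hφS v hv]
  have hψs : ∀ v ∉ S.erase v₀, ψ v = 0 := fun v hv => by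
    by_cases hvS : v ∈ S
    · obtain rfl : v = v₀ := by simpa [hvS] using hv
      simp [ψ, hvS, m]
    · simp [ψ, hvS, hφS v hvS]
  have hsub : S.erase v₀ ⊂ s := (erase_ssubset hv₀S).trans_le (filter_subset _ _)
  have hψsum := ih _ hsub (fun Y hY => hs Y (hY.trans hsub.le)) hψ hψs
  have hcut := hs S (filter_subset _ _) hS
  have hsum : ∑ v, φ v = m * #S + ∑ v, ψ v := by
    simp [ψ, sum_sub_distrib]
    ring
  have hlayer : G.dartSum (fun u v => |φ u - φ v|) =
      2 * m * G.edgeBoundaryCard S + G.dartSum (fun u v => |ψ u - ψ v|) :=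
    dartSum_abs_sub_eq_add_of_le hφ hφS hm
  have hm0 : 0 ≤ m := hφ v₀
  rw [hlayer, hsum]
  nlinarith [mul_le_mul_of_nonneg_left hcut hm0]

theorem dartSum_abs_sq_sub_sq_sq_le {k : ℕ} (hreg : G.IsRegularOfDegree k) (g : V → ℝ) :
    G.dartSum (fun u v => |g u ^ 2 - g v ^ 2|) ^ 2 ≤
      8 * k * (g ⬝ᵥ (G.lapMatrix ℝ *ᵥ g)) * (g ⬝ᵥ g) := by
  have hfactor : ∀ u v, |g u ^ 2 - g v ^ 2| = |g u - g v| * |g u + g v| := fun u v => by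
    rw [← abs_mul]; ring_nf
  have hminus : G.dartSum (fun u v => |g u - g v| ^ 2) = 2 * (g ⬝ᵥ (G.lapMatrix ℝ *ᵥ g)) := by
    simp only [sq_abs, dotProduct_lapMatrix_mulVec]
    ring
  have hplus : G.dartSum (fun u v => |g u + g v| ^ 2) ≤ 4 * k * (g ⬝ᵥ g) := by
    calc G.dartSum (fun u v => |g u + g v| ^ 2)
        ≤ G.dartSum (fun u v => 2 * g u ^ 2 + 2 * g v ^ 2) :=
          dartSum_le_dartSum fun u v _ => by rw [sq_abs]; nlinarith [sq_nonneg (g u - g v)]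
      _ = 4 * k * (g ⬝ᵥ g) := by
          have hswap := dartSum_swap (G := G) (fun u _ => 2 * g u ^ 2)
          rw [dartSum_add, hswap, hreg.dartSum_eq_mul_sum]
          simp only [dotProduct, ← mul_sum, sq]
          ring
  calc G.dartSum (fun u v => |g u ^ 2 - g v ^ 2|) ^ 2
      ≤ G.dartSum (fun u v => |g u - g v| ^ 2) * G.dartSum (fun u v => |g u + g v| ^ 2) := by
        simp only [hfactor]; exact dartSum_mul_sq_le_sq_mul_sq _ _
    _ ≤ 2 * (g ⬝ᵥ (G.lapMatrix ℝ *ᵥ g)) * (4 * k * (g ⬝ᵥ g)) := by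
        rw [hminus]; gcongr; exact mul_nonneg zero_le_two (G.dotProduct_lapMatrix_mulVec_nonneg g)
    _ = 8 * k * (g ⬝ᵥ (G.lapMatrix ℝ *ᵥ g)) * (g ⬝ᵥ g) := by ring

theorem sq_mul_dotProduct_self_le {k : ℕ} (hreg : G.IsRegularOfDegree k) {h : ℝ} (hh : 0 ≤ h)
    (s : Finset V) (hs : ∀ Y ⊆ s, Y.Nonempty → h * #Y ≤ G.edgeBoundaryCard Y)
    {g : V → ℝ} (hgs : ∀ v ∉ s, g v = 0) :
    h ^ 2 * (g ⬝ᵥ g) ≤ 2 * k * (g ⬝ᵥ (G.lapMatrix ℝ *ᵥ g)) := by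
  have hcoarea := two_mul_mul_sum_le_dartSum_abs_sub s hs (φ := fun v => g v ^ 2)
    (fun v => sq_nonneg _) (fun v hv => by simp [hgs v hv])
  have hS : ∑ v, g v ^ 2 = g ⬝ᵥ g := by simp [dotProduct, sq]
  rw [hS] at hcoarea
  have hS0 : 0 ≤ g ⬝ᵥ g := by rw [← hS]; positivity
  have hQ := G.dotProduct_lapMatrix_mulVec_nonneg g
  have hsq : (2 * h * (g ⬝ᵥ g)) ^ 2 ≤ 8 * k * (g ⬝ᵥ (G.lapMatrix ℝ *ᵥ g)) * (g ⬝ᵥ g) :=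
    (pow_le_pow_left₀ (by positivity) hcoarea 2).trans (dartSum_abs_sq_sub_sq_sq_le hreg g)
  rcases hS0.eq_or_lt with hzero | hpos
  · rw [← hzero, mul_zero]; positivity
  · nlinarith

theorem posPart_dotProduct_lapMatrix_mulVec_le {f : V → ℝ} {ν : ℝ}
    (hf : G.lapMatrix ℝ *ᵥ f = ν • f) :
    f⁺ ⬝ᵥ (G.lapMatrix ℝ *ᵥ f⁺) ≤ ν * (f⁺ ⬝ᵥ f⁺) := by
  simp only [dotProduct, mul_sum]
  refine sum_le_sum fun v _ => ?_
  rcases le_or_gt (f v) 0 with hv | hv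
  · simp [posPart_eq_zero.mpr hv]
  · have hLv : (G.lapMatrix ℝ *ᵥ f⁺) v ≤ ν * f v := by
      rw [← smul_eq_mul, ← Pi.smul_apply, ← hf, lapMatrix_mulVec_apply, lapMatrix_mulVec_apply,
        Pi.posPart_apply, posPart_eq_self.mpr hv.le]
      exact sub_le_sub_left (sum_le_sum fun u _ => le_posPart (f u)) _
    rw [Pi.posPart_apply, posPart_eq_self.mpr hv.le]
    nlinarith

theorem sq_div_le_of_lapMatrix_mulVec_eq {k : ℕ} (hreg : G.IsRegularOfDegree k) {h : ℝ}
    (hh : 0 ≤ h)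
    (hbound : ∀ Y : Finset V, Y.Nonempty → 2 * #Y ≤ Fintype.card V →
      h * #Y ≤ G.edgeBoundaryCard Y)
    {f : V → ℝ} {ν : ℝ} (hf : G.lapMatrix ℝ *ᵥ f = ν • f) (hf0 : f ≠ 0) (hsum : ∑ v, f v = 0) :
    h ^ 2 / (2 * k) ≤ ν := by
  wlog hsmall : 2 * #{v | 0 < f v} ≤ Fintype.card V generalizing f with H
  · refine H (f := -f) (by rw [mulVec_neg, hf, smul_neg]) (neg_ne_zero.2 hf0) (by simp [hsum]) ?_
    have hdisj : Disjoint ({v | 0 < f v} : Finset V) ({v | 0 < (-f) v} : Finset V) :=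
      disjoint_filter.2 fun v _ h1 h2 => by simp only [Pi.neg_apply] at h2; linarith
    have := card_union_of_disjoint hdisj ▸ card_le_univ _
    omega
  set g := f⁺
  have hgs : ∀ v ∉ ({v | 0 < f v} : Finset V), g v = 0 := fun v hv => by simpa [g] using hv
  have hcheeger := sq_mul_dotProduct_self_le hreg hh _
    (fun Y hY hYne => hbound Y hYne ((Nat.mul_le_mul_left 2 (card_le_card hY)).trans hsmall)) hgs
  have hray := posPart_dotProduct_lapMatrix_mulVec_le hf
  obtain ⟨v, -, hv⟩ := exists_pos_of_sum_zero_of_exists_nonzero f hsum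
    (by simpa [funext_iff] using hf0)
  have hS : 0 < g ⬝ᵥ g := sum_pos' (fun u _ => mul_self_nonneg _)
    ⟨v, mem_univ v, by simp [g, posPart_eq_self.2 hv.le, hv]⟩
  have hν : 0 ≤ ν :=
    nonneg_of_mul_nonneg_left ((G.dotProduct_lapMatrix_mulVec_nonneg g).trans hray) hS
  refine div_le_of_le_mul₀ (by positivity) hν ?_
  nlinarith

end SimpleGraph

theorem cheeger_inequalities_general
    {V : Type*} [Fintype V] [DecidableEq V]
    (G : SimpleGraph V) [DecidableRel G.Adj]
    (k : ℕ)
    (hconn : G.Connected)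
    (hreg : G.IsRegularOfDegree k)
    (hcard : 2 ≤ Fintype.card V)
    (lam1 : ℝ)
    (hlam1 : lam1 = sSup {μ : ℝ | μ ≠ (k : ℝ) ∧
      ∃ x : V → ℝ, x ≠ 0 ∧ G.adjMatrix ℝ *ᵥ x = μ • x})
    (h : ℝ)
    (hh : h = sInf {r : ℝ | ∃ Y : Finset V, Y.Nonempty ∧ 2 * Y.card ≤ Fintype.card V ∧
      r = ((Finset.univ.filter
        (fun p : V × V => p.1 ∈ Y ∧ p.2 ∉ Y ∧ G.Adj p.1 p.2)).card : ℝ) / Y.card}) :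
    h ^ 2 / (2 * k) ≤ (k : ℝ) - lam1 ∧ (k : ℝ) - lam1 ≤ 2 * h := by
  replace hlam1 : lam1 = sSup (G.nontrivialEigenvalues k) := hlam1
  replace hh : h = G.cheegerConstant := hh
  subst hh
  have hgap : ∀ x : V → ℝ, ∑ v, x v = 0 →
      ((k : ℝ) - lam1) * (x ⬝ᵥ x) ≤ x ⬝ᵥ (G.lapMatrix ℝ *ᵥ x) := fun x hx =>
    hlam1 ▸ sub_sSup_nontrivialEigenvalues_mul_le hconn hreg hx
  obtain ⟨hlamk, f, hf0, hf⟩ : lam1 ∈ G.nontrivialEigenvalues k :=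
    hlam1 ▸ (nontrivialEigenvalues_nonempty hconn hreg hcard).csSup_mem
      (nontrivialEigenvalues_finite k)
  refine ⟨?_, ?_⟩
  · exact sq_div_le_of_lapMatrix_mulVec_eq hreg cheegerConstant_nonneg
      (fun Y hY hY2 => cheegerConstant_mul_card_le hY hY2)
      ((lapMatrix_mulVec_eq_iff_adjMatrix_mulVec_eq hreg).2 hf) hf0
      (sum_eq_zero_of_adjMatrix_mulVec_eq hreg hf hlamk)
  · have : ((k : ℝ) - lam1) / 2 ≤ G.cheegerConstant := le_cheegerConstant hcard fun Y hY hY2 => by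
      linarith [mul_card_le_two_mul_edgeBoundaryCard hgap hY hY2]
    linarith

/-- **Cheeger inequalities** for a finite connected `k`-regular graph (`k ≥ 3`) on at least
two vertices: `h(X)²/(2k) ≤ k − λ₁(X) ≤ 2·h(X)`, where `λ₁(X)` is the largest adjacency
eigenvalue different from `k`, and `h(X)` is the Cheeger constant. -/
theorem cheeger_inequalities
    {V : Type*} [Fintype V] [DecidableEq V]
    (G : SimpleGraph V) [DecidableRel G.Adj]
    (k : ℕ) (hk : 3 ≤ k)
    (hconn : G.Connected)
    (hreg : G.IsRegularOfDegree k)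
    (hcard : 2 ≤ Fintype.card V)
    (lam1 : ℝ)
    (hlam1 : lam1 = sSup {μ : ℝ | μ ≠ (k : ℝ) ∧
      ∃ x : V → ℝ, x ≠ 0 ∧ G.adjMatrix ℝ *ᵥ x = μ • x})
    (h : ℝ)
    (hh : h = sInf {r : ℝ | ∃ Y : Finset V, Y.Nonempty ∧ 2 * Y.card ≤ Fintype.card V ∧
      r = ((Finset.univ.filter
        (fun p : V × V => p.1 ∈ Y ∧ p.2 ∉ Y ∧ G.Adj p.1 p.2)).card : ℝ) / Y.card}) :
    h ^ 2 / (2 * k) ≤ (k : ℝ) - lam1 ∧ (k : ℝ) - lam1 ≤ 2 * h :=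
  cheeger_inequalities_general G k hconn hreg hcard lam1 hlam1 h hh
end

section
/- (Hashimoto) Let q ≥ 2 and let X be a finite connected (q+1)-regular graph with non-backtracking matrix B. Then every eigenvalue λ of the adjacency matrix of X satisfies |λ| = q+1 or |λ| ≤ 2√q (i.e. X is Ramanujan) if and only if every complex eigenvalue μ of B satisfies |μ| = q or |μ| ≤ √q (i.e. the non-backtracking digraph D_X is a Ramanujan digraph). -/
/-!
For `μ ∉ {0, ±1}`, `μ` is an eigenvalue of the non-backtracking matrix `B` exactly when
`λ = μ + q / μ` is an eigenvalue of the adjacency matrix `A`. If `B y = μ y`, summing `y` over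
the directed edges leaving each vertex gives `g` with `μ A g = (μ² + q) g`, and `g = 0` forces
`μ² = 1`; as `A` is symmetric, `λ` is then real and has a real eigenvector. Conversely, if `A x = λ x` and `m² - λ m + q = 0`, then `y (u, v) = x u - m x v`
satisfies `B y = m y`. The two Ramanujan bounds then correspond through the roots of
`z² - λ z + q`: they have modulus `√q` when `|λ| ≤ 2√q`, one of them is real of modulus `> √q`
when `|λ| > 2√q`, and they are `±1, ±q` when `|λ| = q + 1`.
-/

open Matrix

namespace Matrix

variable {n : Type*} [Fintype n]

lemma IsHermitian.conj_eq_of_mulVec_eq_smul {𝕜 : Type*} [RCLike 𝕜] [DecidableEq n]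
    {A : Matrix n n 𝕜} (hA : A.IsHermitian) {g : n → 𝕜} (hg : g ≠ 0) {l : 𝕜}
    (h : A *ᵥ g = l • g) : starRingEnd 𝕜 l = l :=
  (isSymmetric_toEuclideanLin_iff.mpr hA).conj_eigenvalue_eq_self
    (Module.End.hasEigenvalue_of_hasEigenvector (x := WithLp.toLp 2 g)
      ⟨by simp [h], by simpa using hg⟩)

lemma exists_ne_zero_mulVec_eq_smul_of_map_ofReal {A : Matrix n n ℝ} {g : n → ℂ} (hg : g ≠ 0)
    {r : ℝ} (h : A.map (↑) *ᵥ g = (r : ℂ) • g) : ∃ x : n → ℝ, x ≠ 0 ∧ A *ᵥ x = r • x := by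
  have hre : A *ᵥ (fun j => (g j).re) = r • fun j => (g j).re := by
    ext i
    simpa [mulVec, dotProduct, Complex.re_sum] using congrArg Complex.re (congrFun h i)
  have him : A *ᵥ (fun j => (g j).im) = r • fun j => (g j).im := by
    ext i
    simpa [mulVec, dotProduct, Complex.im_sum] using congrArg Complex.im (congrFun h i)
  by_cases hre0 : (fun j => (g j).re) = 0
  · exact ⟨_, fun him0 => hg (funext fun j => Complex.ext (congrFun hre0 j) (congrFun him0 j)),
      him⟩
  · exact ⟨_, hre0, hre⟩

end Matrix

section quadratic

variable {q : ℝ}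

lemma Complex.norm_le_sqrt_of_sq_sub_mul_add_eq_zero (hq : 0 ≤ q) {l : ℝ} (hl : |l| ≤ 2 * √q)
    {μ : ℂ} (hμ : μ ^ 2 - l * μ + q = 0) : ‖μ‖ ≤ √q := by
  have hl2 : l ^ 2 ≤ 4 * q := by
    nlinarith [Real.sq_sqrt hq, abs_nonneg l, Real.sqrt_nonneg q, sq_abs l]
  have hre := congrArg Complex.re hμ
  have him := congrArg Complex.im hμ
  simp only [pow_two, Complex.sub_re, Complex.add_re, Complex.mul_re, Complex.ofReal_re,
    Complex.ofReal_im, Complex.sub_im, Complex.add_im, Complex.mul_im, Complex.zero_re,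
    Complex.zero_im] at hre him
  rw [Complex.norm_def, Complex.normSq_apply]
  refine Real.sqrt_le_sqrt ?_
  have hcentre : l = 2 * μ.re := by
    rcases mul_eq_zero.mp (show μ.im * (2 * μ.re - l) = 0 by linear_combination him) with h | h
    · rw [h] at hre
      have : (2 * μ.re - l) ^ 2 = 0 := le_antisymm (by nlinarith) (sq_nonneg _)
      linarith [pow_eq_zero_iff two_ne_zero |>.mp this]
    · linarith
  subst hcentre
  nlinarith

lemma Complex.norm_eq_or_le_sqrt_of_sq_sub_mul_add_eq_zero (hq : 1 ≤ q) {l : ℝ}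
    (hl : |l| = q + 1 ∨ |l| ≤ 2 * √q) {μ : ℂ} (hμ : μ ^ 2 - l * μ + q = 0) :
    ‖μ‖ = q ∨ ‖μ‖ ≤ √q := by
  rcases hl with hl | hl
  · obtain ⟨s, hs, rfl⟩ : ∃ s : ℝ, |s| = 1 ∧ l = s * (q + 1) := by
      rcases abs_choice l with h | h
      · exact ⟨1, abs_one, by linarith⟩
      · exact ⟨-1, by simp, by linarith⟩
    have hs2 : (s : ℂ) ^ 2 = 1 := by exact_mod_cast (show s ^ 2 = 1 by rw [← sq_abs, hs, one_pow])
    push_cast at hμ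
    rcases mul_eq_zero.mp (show (μ - s) * (μ - s * q) = 0 by linear_combination hμ + q * hs2)
      with h | h
    · right
      rw [sub_eq_zero.mp h, Complex.norm_real, Real.norm_eq_abs, hs]
      exact Real.one_le_sqrt.mpr hq
    · left
      rw [sub_eq_zero.mp h, ← Complex.ofReal_mul, Complex.norm_real, Real.norm_eq_abs, abs_mul, hs,
        one_mul, abs_of_nonneg (by linarith)]
  · exact Or.inr (norm_le_sqrt_of_sq_sub_mul_add_eq_zero (by linarith) hl hμ)

lemma exists_sq_sub_mul_add_eq_zero_sqrt_lt_abs (hq : 0 ≤ q) {lam : ℝ} (h : 2 * √q < |lam|) :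
    ∃ m : ℝ, m ^ 2 - lam * m + q = 0 ∧ √q < |m| := by
  have hD : 0 ≤ lam ^ 2 - 4 * q := by
    nlinarith [Real.sq_sqrt hq, Real.sqrt_nonneg q, sq_abs lam]
  obtain ⟨m, hm, hlt⟩ : ∃ m : ℝ, m ^ 2 - |lam| * m + q = 0 ∧ √q < m := by
    refine ⟨(|lam| + √(lam ^ 2 - 4 * q)) / 2, ?_, ?_⟩
    · linear_combination (Real.sq_sqrt hD) / 4 - (sq_abs lam) / 4
    · linarith [Real.sqrt_nonneg (lam ^ 2 - 4 * q)]
  rcases abs_choice lam with h | h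
  · exact ⟨m, by rwa [h] at hm, by rwa [abs_of_pos (by linarith [Real.sqrt_nonneg q])]⟩
  · refine ⟨-m, by rw [h] at hm; linear_combination hm, ?_⟩
    rwa [abs_neg, abs_of_pos (by linarith [Real.sqrt_nonneg q])]

lemma abs_eq_add_one_of_sq_sub_mul_add_eq_zero (hq : q ≠ 0) {lam m : ℝ}
    (hm : m ^ 2 - lam * m + q = 0) (h : |m| = q) : |lam| = q + 1 := by
  have hq0 : 0 ≤ q := h ▸ abs_nonneg m
  refine mul_right_cancel₀ hq ?_
  calc |lam| * q = |lam * m| := by rw [abs_mul, h]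
    _ = |m ^ 2 + q| := by congr 1; linear_combination -hm
    _ = (q + 1) * q := by rw [← sq_abs, h, abs_of_nonneg (by positivity)]; ring

end quadratic

namespace SimpleGraph

variable {V : Type*} {G : SimpleGraph V}

lemma map_adjMatrix {R S : Type*} [DecidableRel G.Adj] [NonAssocSemiring R] [NonAssocSemiring S]
    (f : R →+* S) : (G.adjMatrix R).map f = G.adjMatrix S := by
  ext u v
  by_cases h : G.Adj u v <;> simp [h]

variable (G) in
abbrev DirEdge := {e : V × V // G.Adj e.1 e.2}

def DirEdge.reverse (e : G.DirEdge) : G.DirEdge := ⟨(e.1.2, e.1.1), e.2.symm⟩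

@[simp] lemma DirEdge.reverse_reverse (e : G.DirEdge) : e.reverse.reverse = e := rfl

@[simp] lemma DirEdge.reverse_snd (e : G.DirEdge) : e.reverse.1.2 = e.1.1 := rfl

lemma sq_eq_one_of_forall_eq_mul {R : Type*} [CommRing R] [IsDomain R] {x : V → R} {m : R}
    (hadj : ∀ v, ∃ w, G.Adj v w) (hx : x ≠ 0) (h : ∀ e : G.DirEdge, x e.1.1 = m * x e.1.2) :
    m ^ 2 = 1 := by
  obtain ⟨u, hu⟩ := Function.ne_iff.mp hx
  obtain ⟨v, huv⟩ := hadj u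
  have hx_sq : (m ^ 2 - 1) * x u = 0 := by
    linear_combination -h ⟨(u, v), huv⟩ - m * h ⟨(v, u), huv.symm⟩
  exact sub_eq_zero.mp ((mul_eq_zero.mp hx_sq).resolve_right hu)

variable [Fintype V] [DecidableEq V] [DecidableRel G.Adj] {R : Type*}

variable (G) in
def nonBacktrackingMatrix (R : Type*) [Zero R] [One R] : Matrix G.DirEdge G.DirEdge R :=
  of fun e f => if e.1.2 = f.1.1 ∧ f.1.2 ≠ e.1.1 then 1 else 0

def outSum [AddCommMonoid R] (y : G.DirEdge → R) (v : V) : R := ∑ f with f.1.1 = v, y f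

lemma sum_dirEdge_from_eq_sum_neighborFinset [AddCommMonoid R] (u : V) (F : V → R) :
    ∑ f : G.DirEdge with f.1.1 = u, F f.1.2 = ∑ v ∈ G.neighborFinset u, F v := by
  refine Finset.sum_bij' (fun f _ => f.1.2) (fun v hv => ⟨(u, v), by simpa using hv⟩)
    ?_ ?_ ?_ ?_ ?_ <;> aesop

lemma sum_dirEdge_from_const [AddCommMonoid R] {d : ℕ} (hreg : G.IsRegularOfDegree d) (u : V)
    (a : R) : ∑ f : G.DirEdge with f.1.1 = u, a = d • a := by
  simpa [hreg u] using sum_dirEdge_from_eq_sum_neighborFinset (G := G) u fun _ => a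

lemma nonBacktrackingMatrix_mulVec_apply [Ring R] (y : G.DirEdge → R) (e : G.DirEdge) :
    (G.nonBacktrackingMatrix R *ᵥ y) e = outSum y e.1.2 - y e.reverse := by
  have hrow : ∀ f, G.nonBacktrackingMatrix R e f =
      (if f.1.1 = e.1.2 then 1 else 0) - if f = e.reverse then 1 else 0 := by
    intro f
    rw [nonBacktrackingMatrix, of_apply]
    by_cases h1 : f.1.1 = e.1.2 <;> by_cases h2 : f.1.2 = e.1.1 <;>
      simp [h1, h2, DirEdge.reverse, Subtype.ext_iff, Prod.ext_iff, eq_comm]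
  simp [mulVec, dotProduct, hrow, sub_mul, Finset.sum_sub_distrib, ite_mul, outSum,
    Finset.sum_filter]

section eigenvector

variable [CommRing R] {y : G.DirEdge → R} {μ : R}

lemma sq_sub_one_mul_eq_of_mulVec_eq_smul (hy : G.nonBacktrackingMatrix R *ᵥ y = μ • y)
    (e : G.DirEdge) : (μ ^ 2 - 1) * y e = μ * outSum y e.1.2 - outSum y e.1.1 := by
  have h := congrFun hy e
  have hrev := congrFun hy e.reverse
  simp only [nonBacktrackingMatrix_mulVec_apply, Pi.smul_apply, smul_eq_mul,
    DirEdge.reverse_reverse, DirEdge.reverse_snd] at h hrev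
  linear_combination (-μ) * h + hrev

lemma smul_adjMatrix_mulVec_outSum {q : ℕ} (hreg : G.IsRegularOfDegree (q + 1))
    (hy : G.nonBacktrackingMatrix R *ᵥ y = μ • y) :
    μ • (G.adjMatrix R *ᵥ outSum y) = (μ ^ 2 + q) • outSum y := by
  ext u
  have hsum := Finset.sum_congr (s₁ := {f : G.DirEdge | f.1.1 = u}) rfl
    fun f _ => sq_sub_one_mul_eq_of_mulVec_eq_smul hy f
  have hsource : ∑ f : G.DirEdge with f.1.1 = u, outSum y f.1.1 = (q + 1) * outSum y u := by
    rw [Finset.sum_congr rfl fun f hf => by rw [(Finset.mem_filter.1 hf).2],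
      sum_dirEdge_from_const hreg, nsmul_eq_mul]
    push_cast
    ring
  rw [← Finset.mul_sum, Finset.sum_sub_distrib, ← Finset.mul_sum, hsource,
    sum_dirEdge_from_eq_sum_neighborFinset (F := outSum y)] at hsum
  simp only [Pi.smul_apply, smul_eq_mul, adjMatrix_mulVec_apply]
  unfold outSum at hsum ⊢
  linear_combination -hsum

lemma sq_eq_one_of_outSum_eq_zero [IsDomain R] (hy : G.nonBacktrackingMatrix R *ᵥ y = μ • y)
    (hy0 : y ≠ 0) (hg : outSum y = 0) : μ ^ 2 = 1 := by
  obtain ⟨e, he⟩ := Function.ne_iff.mp hy0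
  have h := sq_sub_one_mul_eq_of_mulVec_eq_smul hy e
  simp only [hg, Pi.zero_apply, mul_zero, sub_zero] at h
  exact sub_eq_zero.mp ((mul_eq_zero.mp h).resolve_right he)

lemma nonBacktrackingMatrix_mulVec_sub_mul_eq_smul {q : ℕ} (hreg : G.IsRegularOfDegree (q + 1))
    {x : V → R} {lam m : R} (hx : G.adjMatrix R *ᵥ x = lam • x) (hm : m ^ 2 - lam * m + q = 0) :
    G.nonBacktrackingMatrix R *ᵥ (fun e : G.DirEdge => x e.1.1 - m * x e.1.2) =
      m • fun e : G.DirEdge => x e.1.1 - m * x e.1.2 := by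
  have hout : ∀ v, outSum (fun e : G.DirEdge => x e.1.1 - m * x e.1.2) v =
      (q + 1) * x v - m * (lam * x v) := by
    intro v
    have hAv := congrFun hx v
    rw [adjMatrix_mulVec_apply, Pi.smul_apply, smul_eq_mul] at hAv
    rw [outSum, Finset.sum_congr rfl fun f hf => by rw [(Finset.mem_filter.1 hf).2],
      sum_dirEdge_from_eq_sum_neighborFinset v (fun w => x v - m * x w), Finset.sum_sub_distrib,
      ← Finset.mul_sum, hAv, Finset.sum_const, card_neighborFinset_eq_degree, hreg.degree_eq,
      nsmul_eq_mul]
    push_cast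
    ring
  ext e
  rw [nonBacktrackingMatrix_mulVec_apply, hout, Pi.smul_apply, smul_eq_mul]
  simp only [DirEdge.reverse]
  linear_combination (x e.1.2) * hm

end eigenvector

lemma exists_adjMatrix_eigenvector_of_nonBacktrackingMatrix {q : ℕ}
    (hreg : G.IsRegularOfDegree (q + 1)) {y : G.DirEdge → ℂ} (hy0 : y ≠ 0)
    {μ : ℂ} (hy : G.nonBacktrackingMatrix ℂ *ᵥ y = μ • y) (hμ0 : μ ≠ 0) (hμ1 : μ ^ 2 ≠ 1) :
    ∃ l : ℝ, (∃ x : V → ℝ, x ≠ 0 ∧ G.adjMatrix ℝ *ᵥ x = l • x) ∧ μ ^ 2 - l * μ + q = 0 := by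
  have hg : outSum y ≠ 0 := fun h => hμ1 (sq_eq_one_of_outSum_eq_zero hy hy0 h)
  have hAg : G.adjMatrix ℂ *ᵥ outSum y = ((μ ^ 2 + q) / μ) • outSum y := by
    rw [div_eq_inv_mul, mul_smul, ← smul_adjMatrix_mulVec_outSum hreg hy, inv_smul_smul₀ hμ0]
  obtain ⟨l, hl⟩ := Complex.conj_eq_iff_real.mp
    ((G.isHermitian_adjMatrix ℂ).conj_eq_of_mulVec_eq_smul hg hAg)
  rw [hl, ← map_adjMatrix Complex.ofRealHom] at hAg
  refine ⟨l, exists_ne_zero_mulVec_eq_smul_of_map_ofReal hg hAg, ?_⟩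
  rw [← hl, div_mul_cancel₀ _ hμ0]
  ring

lemma exists_nonBacktrackingMatrix_eigenvector_of_adjMatrix {q : ℕ}
    (hreg : G.IsRegularOfDegree (q + 1)) {x : V → ℝ} (hx0 : x ≠ 0) {lam : ℝ}
    (hx : G.adjMatrix ℝ *ᵥ x = lam • x) {m : ℝ} (hm : m ^ 2 - lam * m + q = 0) (hm1 : m ^ 2 ≠ 1) :
    ∃ y : G.DirEdge → ℂ, y ≠ 0 ∧ G.nonBacktrackingMatrix ℂ *ᵥ y = (m : ℂ) • y := by
  have hxC : G.adjMatrix ℂ *ᵥ (fun v => (x v : ℂ)) = (lam : ℂ) • fun v => (x v : ℂ) := by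
    ext v
    rw [← map_adjMatrix Complex.ofRealHom]
    exact (RingHom.map_mulVec Complex.ofRealHom _ x v).symm.trans (by rw [hx]; simp)
  have hxC0 : (fun v => (x v : ℂ)) ≠ 0 := fun h =>
    hx0 (funext fun v => Complex.ofReal_eq_zero.mp (congrFun h v))
  have hadj : ∀ v, ∃ w, G.Adj v w := fun v =>
    (G.degree_pos_iff_exists_adj v).mp (by rw [hreg.degree_eq]; omega)
  refine ⟨_, fun h => hm1 ?_, nonBacktrackingMatrix_mulVec_sub_mul_eq_smul hreg hxC
    (by exact_mod_cast hm)⟩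
  exact_mod_cast sq_eq_one_of_forall_eq_mul hadj hxC0 fun e => sub_eq_zero.mp (congrFun h e)

end SimpleGraph

open SimpleGraph

theorem hashimoto_ramanujan_general
    {V : Type*} [Fintype V] [DecidableEq V]
    (G : SimpleGraph V) [DecidableRel G.Adj]
    (q : ℕ) (hq : 2 ≤ q)
    (hreg : G.IsRegularOfDegree (q + 1))
    (B : Matrix {e : V × V // G.Adj e.1 e.2} {e : V × V // G.Adj e.1 e.2} ℂ)
    (hB : ∀ e f : {e : V × V // G.Adj e.1 e.2},
      B e f = if e.1.2 = f.1.1 ∧ f.1.2 ≠ e.1.1 then 1 else 0) :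
    (∀ lam : ℝ, (∃ x : V → ℝ, x ≠ 0 ∧ G.adjMatrix ℝ *ᵥ x = lam • x) →
        |lam| = (q : ℝ) + 1 ∨ |lam| ≤ 2 * Real.sqrt (q : ℝ)) ↔
    (∀ mu : ℂ, (∃ y : {e : V × V // G.Adj e.1 e.2} → ℂ, y ≠ 0 ∧ B *ᵥ y = mu • y) →
        ‖mu‖ = (q : ℝ) ∨ ‖mu‖ ≤ Real.sqrt (q : ℝ)) := by
  obtain rfl : B = G.nonBacktrackingMatrix ℂ := Matrix.ext hB
  have hq1 : (1 : ℝ) ≤ q := by exact_mod_cast (by omega : 1 ≤ q)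
  have hsqrt : 1 ≤ √(q : ℝ) := Real.one_le_sqrt.mpr hq1
  constructor
  · rintro hA μ ⟨y, hy0, hy⟩
    by_cases hμ : ‖μ‖ ≤ √(q : ℝ)
    · exact Or.inr hμ
    have hμ1 : μ ^ 2 ≠ 1 := fun h => by linarith [Complex.norm_eq_one_of_pow_eq_one h two_ne_zero]
    have hμ0 : μ ≠ 0 := by rintro rfl; exact hμ (by simp)
    obtain ⟨l, hl, hμl⟩ :=
      exists_adjMatrix_eigenvector_of_nonBacktrackingMatrix hreg hy0 hy hμ0 hμ1
    exact Complex.norm_eq_or_le_sqrt_of_sq_sub_mul_add_eq_zero hq1 (hA l hl) (by exact_mod_cast hμl)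
  · rintro hB' lam ⟨x, hx0, hx⟩
    by_cases hlam : |lam| ≤ 2 * √(q : ℝ)
    · exact Or.inr hlam
    obtain ⟨m, hm, hmq⟩ :=
      exists_sq_sub_mul_add_eq_zero_sqrt_lt_abs (Nat.cast_nonneg q) (not_le.mp hlam)
    have hm1 : m ^ 2 ≠ 1 := ((one_lt_sq_iff_one_lt_abs m).mpr (by linarith)).ne'
    rcases hB' m (exists_nonBacktrackingMatrix_eigenvector_of_adjMatrix hreg hx0 hx hm hm1)
      with h | h <;> rw [Complex.norm_real, Real.norm_eq_abs] at h
    · exact Or.inl (abs_eq_add_one_of_sq_sub_mul_add_eq_zero (by positivity) hm h)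
    · linarith

/-- **Hashimoto**: a finite connected `(q+1)`-regular graph `X` is Ramanujan (every
adjacency eigenvalue `λ` has `|λ| = q+1` or `|λ| ≤ 2√q`) if and only if its
non-backtracking digraph is a Ramanujan digraph (every eigenvalue `μ` of the
non-backtracking matrix `B` has `|μ| = q` or `|μ| ≤ √q`). -/
theorem hashimoto_ramanujan
    {V : Type*} [Fintype V] [DecidableEq V]
    (G : SimpleGraph V) [DecidableRel G.Adj]
    (q : ℕ) (hq : 2 ≤ q)
    (hconn : G.Connected) (hreg : G.IsRegularOfDegree (q + 1))
    (B : Matrix {e : V × V // G.Adj e.1 e.2} {e : V × V // G.Adj e.1 e.2} ℂ)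
    (hB : ∀ e f : {e : V × V // G.Adj e.1 e.2},
      B e f = if e.1.2 = f.1.1 ∧ f.1.2 ≠ e.1.1 then 1 else 0) :
    (∀ lam : ℝ, (∃ x : V → ℝ, x ≠ 0 ∧ G.adjMatrix ℝ *ᵥ x = lam • x) →
        |lam| = (q : ℝ) + 1 ∨ |lam| ≤ 2 * Real.sqrt (q : ℝ)) ↔
    (∀ mu : ℂ, (∃ y : {e : V × V // G.Adj e.1 e.2} → ℂ, y ≠ 0 ∧ B *ᵥ y = mu • y) →
        ‖mu‖ = (q : ℝ) ∨ ‖mu‖ ≤ Real.sqrt (q : ℝ)) :=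
  hashimoto_ramanujan_general G q hq hreg B hB
end

section
/- (Parzanchevski–Sarnak covering bound) Let G be a compact topological group equipped with a metric d inducing its topology which is invariant under left and right translations, and let μ be the normalized Haar probability measure on G. Let S be a finite nonempty subset of G, let T_S be the bounded operator on L²(G, μ) defined by (T_S f)(g) = Σ_{s ∈ S} f(sg), and let λ_S be the operator norm of the restriction of T_S to the subspace {f ∈ L²(G, μ) : ∫_G f dμ = 0}. Then for every ε > 0, the ε-neighborhood of S satisfies μ(∪_{s ∈ S} B_ε(s)) ≥ 1 − λ_S² / (|S|² · μ(B_ε(1))), where B_ε(x) is the open ball of radius ε around x and 1 is the identity of G. -/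
/-!
Test `T_S` on the mean-zero function `f = 𝟙_B - μ(B)` with `B = B_ε(1)`, for which
`‖f‖² = μ(B) (1 - μ(B))`. If `g` lies outside `N = ⋃_{s ∈ S} s⁻¹ B`, no translate `s g` lies
in `B`, so `(T_S f)(g) = -|S| μ(B)`; hence `|S|² μ(B)² μ(Nᶜ) ≤ ‖T_S f‖² ≤ λ_S² μ(B)`.
Bi-invariance of the metric gives `N = (⋃_{s ∈ S} B_ε(s))⁻¹`, and the Haar probability measure
of a compact group is invariant under inversion, so `μ(N)` is the measure of the
`ε`-neighbourhood of `S`.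
-/

open MeasureTheory

namespace MeasureTheory

namespace Measure

variable {G : Type*} [Group G] [TopologicalSpace G] [IsTopologicalGroup G] [LocallyCompactSpace G]
  [MeasurableSpace G] [BorelSpace G] (μ : Measure G) [μ.IsHaarMeasure] [IsProbabilityMeasure μ]

lemma isMulRightInvariant_of_isProbabilityMeasure : μ.IsMulRightInvariant where
  map_mul_right_eq_self g := by
    have : IsProbabilityMeasure (μ.map (· * g)) :=
      isProbabilityMeasure_map (measurable_mul_const g).aemeasurable
    exact isHaarMeasure_eq_of_isProbabilityMeasure _ μ

lemma isInvInvariant_of_isProbabilityMeasure : μ.IsInvInvariant where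
  inv_eq_self := by
    have := isMulRightInvariant_of_isProbabilityMeasure μ
    have : IsProbabilityMeasure μ.inv := isProbabilityMeasure_map measurable_inv.aemeasurable
    have : μ.inv.IsHaarMeasure := ⟨⟩
    exact isHaarMeasure_eq_of_isProbabilityMeasure _ μ

end Measure

namespace Lp

variable {α E : Type*} {m : MeasurableSpace α} {μ : Measure α} [NormedAddCommGroup E]

lemma norm_sq_eq_integral_norm_sq (f : Lp E 2 μ) : ‖f‖ ^ 2 = ∫ a, ‖f a‖ ^ 2 ∂μ := by
  rw [norm_def, toReal_eLpNorm (Lp.aestronglyMeasurable f),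
    lpNorm_eq_integral_norm_rpow_toReal two_ne_zero ENNReal.ofNat_ne_top
      (Lp.aestronglyMeasurable f)]
  simp only [ENNReal.toReal_ofNat, Real.rpow_two]
  rw [← Real.rpow_natCast, ← Real.rpow_mul (integral_nonneg fun _ => by positivity)]
  norm_num

lemma sq_mul_measureReal_le_norm_sq (u : Lp E 2 μ) {A : Set α} (hA : MeasurableSet A) {c : ℝ}
    (h : ∀ᵐ x ∂μ, x ∈ A → c ≤ ‖u x‖) (hc : 0 ≤ c) : c ^ 2 * μ.real A ≤ ‖u‖ ^ 2 := by
  rcases eq_or_ne (μ A) ⊤ with hA_top | hA_top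
  · simp [measureReal_def, hA_top]
  have hint : Integrable (fun x => ‖u x‖ ^ 2) μ := (Lp.memLp u).integrable_norm_pow two_ne_zero
  calc c ^ 2 * μ.real A = ∫ _ in A, c ^ 2 ∂μ := by rw [setIntegral_const, smul_eq_mul, mul_comm]
    _ ≤ ∫ x in A, ‖u x‖ ^ 2 ∂μ := by
      refine setIntegral_mono_on_ae (integrableOn_const hA_top) hint.integrableOn hA ?_
      filter_upwards [h] with x hx hxA
      exact pow_le_pow_left₀ hc (hx hxA) 2
    _ ≤ ∫ x, ‖u x‖ ^ 2 ∂μ := setIntegral_le_integral hint (ae_of_all _ fun _ => by positivity)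
    _ = ‖u‖ ^ 2 := (norm_sq_eq_integral_norm_sq u).symm

end Lp

end MeasureTheory

lemma ContinuousLinearMap.norm_apply_le_sSup_mul_norm {𝕜 E F : Type*} [RCLike 𝕜]
    [NormedAddCommGroup E] [NormedSpace 𝕜 E] [NormedAddCommGroup F] [NormedSpace 𝕜 F]
    (T : E →L[𝕜] F) {P : E → Prop} (hP : ∀ (c : 𝕜) x, P x → P (c • x)) {x : E} (hx : P x) :
    ‖T x‖ ≤ sSup {r : ℝ | ∃ y, P y ∧ ‖y‖ ≤ 1 ∧ r = ‖T y‖} * ‖x‖ := by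
  rcases eq_or_ne x 0 with rfl | hx0
  · simp
  have hbdd : BddAbove {r : ℝ | ∃ y, P y ∧ ‖y‖ ≤ 1 ∧ r = ‖T y‖} := by
    refine ⟨‖T‖, ?_⟩
    rintro r ⟨y, -, hy, rfl⟩
    exact T.le_of_opNorm_le_of_le le_rfl hy |>.trans_eq (mul_one _)
  have hxpos : 0 < ‖x‖ := norm_pos_iff.2 hx0
  have hunit : ‖((‖x‖⁻¹ : ℝ) : 𝕜) • x‖ ≤ 1 := by
    rw [norm_smul, RCLike.norm_ofReal, abs_of_pos (inv_pos.2 hxpos), inv_mul_cancel₀ hxpos.ne']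
  have := le_csSup hbdd ⟨_, hP _ x hx, hunit, rfl⟩
  rw [map_smul, norm_smul, RCLike.norm_ofReal, abs_of_pos (inv_pos.2 hxpos),
    inv_mul_le_iff₀ hxpos] at this
  linarith

section BiInvariantMetric

open Metric

variable {G : Type*} [Group G] [PseudoMetricSpace G] [IsIsometricSMul G G] [IsIsometricSMul Gᵐᵒᵖ G]

lemma biUnion_preimage_mul_left_ball_one (S : Set G) (ε : ℝ) :
    ⋃ s ∈ S, (s * ·) ⁻¹' ball 1 ε = (⋃ s ∈ S, ball s ε)⁻¹ := by
  simp only [preimage_mul_left_ball, mul_one, Set.iUnion_inv]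
  exact Set.iUnion₂_congr fun s _ => ((IsometryEquiv.inv G).preimage_ball s ε).symm

lemma measureReal_biUnion_preimage_mul_left_ball_one [MeasurableSpace G] [MeasurableInv G]
    (μ : Measure G) [μ.IsInvInvariant] (S : Set G) (ε : ℝ) :
    μ.real (⋃ s ∈ S, (s * ·) ⁻¹' ball 1 ε) = μ.real (⋃ s ∈ S, ball s ε) := by
  rw [biUnion_preimage_mul_left_ball_one, measureReal_def, Measure.measure_inv, measureReal_def]

end BiInvariantMetric

noncomputable def centeredIndicator {α : Type*} [MeasurableSpace α] (𝕜 : Type*) [RCLike 𝕜]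
    (μ : Measure α) (B : Set α) (x : α) : 𝕜 :=
  B.indicator 1 x - μ.real B

section centeredIndicator

variable {α : Type*} [MeasurableSpace α] {𝕜 : Type*} [RCLike 𝕜] {μ : Measure α} {B : Set α}

lemma centeredIndicator_of_notMem {x : α} (hx : x ∉ B) :
    centeredIndicator 𝕜 μ B x = -(μ.real B : 𝕜) := by
  simp [centeredIndicator, hx]

lemma norm_sum_centeredIndicator_of_forall_notMem {ι : Type*} (S : Finset ι) {x : ι → α}
    (hx : ∀ i ∈ S, x i ∉ B) :
    ‖∑ i ∈ S, centeredIndicator 𝕜 μ B (x i)‖ = S.card * μ.real B := by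
  rw [Finset.sum_congr rfl fun i hi => centeredIndicator_of_notMem (hx i hi), Finset.sum_const,
    nsmul_eq_mul, norm_mul, norm_neg, RCLike.norm_natCast, RCLike.norm_ofReal,
    abs_of_nonneg measureReal_nonneg]

variable [IsProbabilityMeasure μ]

lemma memLp_centeredIndicator (hB : MeasurableSet B) (p) : MemLp (centeredIndicator 𝕜 μ B) p μ :=
  (memLp_indicator_const p hB 1 (Or.inr (measure_ne_top μ B))).sub (memLp_const _)

lemma integral_centeredIndicator (hB : MeasurableSet B) :
    ∫ x, centeredIndicator 𝕜 μ B x ∂μ = 0 := by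
  unfold centeredIndicator
  rw [integral_sub ((integrable_const 1).indicator hB) (integrable_const _)]
  simp [integral_indicator hB, RCLike.real_smul_eq_coe_mul]

lemma integral_norm_sq_centeredIndicator (hB : MeasurableSet B) :
    ∫ x, ‖centeredIndicator 𝕜 μ B x‖ ^ 2 ∂μ = μ.real B * (1 - μ.real B) := by
  have h : ∀ x, ‖centeredIndicator 𝕜 μ B x‖ ^ 2
      = B.indicator (fun _ => 1 - 2 * μ.real B) x + μ.real B ^ 2 := by
    intro x
    by_cases hx : x ∈ B
    · rw [centeredIndicator, Set.indicator_of_mem hx, Pi.one_apply, ← RCLike.ofReal_one,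
        ← RCLike.ofReal_sub, RCLike.norm_ofReal, sq_abs, Set.indicator_of_mem hx]
      ring
    · simp [centeredIndicator, hx]
  simp_rw [h]
  rw [integral_add ((integrable_const _).indicator hB) (integrable_const _),
    integral_indicator_const _ hB]
  simp only [smul_eq_mul, integral_const, probReal_univ, one_mul]
  ring

end centeredIndicator

theorem sq_card_mul_measureReal_mul_measureReal_compl_le {G 𝕜 : Type*} [Group G]
    [MeasurableSpace G] [MeasurableMul G] [RCLike 𝕜] {μ : Measure G} [μ.IsMulLeftInvariant]
    [IsProbabilityMeasure μ] {S : Finset G} {T : Lp 𝕜 2 μ →L[𝕜] Lp 𝕜 2 μ}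
    (hT : ∀ f : Lp 𝕜 2 μ, (T f : G → 𝕜) =ᵐ[μ] fun g => ∑ s ∈ S, f (s * g)) {lam : ℝ}
    (hlam : ∀ f : Lp 𝕜 2 μ, ∫ g, (f : G → 𝕜) g ∂μ = 0 → ‖T f‖ ≤ lam * ‖f‖)
    {B : Set G} (hB : MeasurableSet B) :
    (S.card * μ.real B) ^ 2 * μ.real (⋃ s ∈ (S : Set G), (s * ·) ⁻¹' B)ᶜ
      ≤ lam ^ 2 * (μ.real B * (1 - μ.real B)) := by
  have hf := memLp_centeredIndicator (𝕜 := 𝕜) (μ := μ) hB 2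
  set f := hf.toLp
  have hmean : ∫ g, (f : G → 𝕜) g ∂μ = 0 := by
    rw [integral_congr_ae hf.coeFn_toLp, integral_centeredIndicator hB]
  have hf_norm : ‖f‖ ^ 2 = μ.real B * (1 - μ.real B) := by
    rw [Lp.norm_sq_eq_integral_norm_sq, ← integral_norm_sq_centeredIndicator (𝕜 := 𝕜) hB]
    exact integral_congr_ae (hf.coeFn_toLp.mono fun g hg => congrArg (‖·‖ ^ 2) hg)
  set N := ⋃ s ∈ (S : Set G), (s * ·) ⁻¹' B
  have hN : MeasurableSet N := .biUnion S.countable_toSet fun s _ => measurable_const_mul s hB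
  have hoff : ∀ᵐ g ∂μ, g ∈ Nᶜ → S.card * μ.real B ≤ ‖(T f : G → 𝕜) g‖ := by
    have htransl : ∀ᵐ g ∂μ, ∀ s ∈ S, (f : G → 𝕜) (s * g) = centeredIndicator 𝕜 μ B (s * g) :=
      (Filter.eventually_all_finset S).2 fun s _ =>
        (measurePreserving_mul_left μ s).quasiMeasurePreserving.ae_eq_comp hf.coeFn_toLp
    filter_upwards [hT f, htransl] with g hTg hg hgN
    rw [hTg, Finset.sum_congr rfl hg, norm_sum_centeredIndicator_of_forall_notMem]
    exact fun s hs hsB => hgN (Set.mem_biUnion hs hsB)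
  calc (S.card * μ.real B) ^ 2 * μ.real Nᶜ ≤ ‖T f‖ ^ 2 :=
        Lp.sq_mul_measureReal_le_norm_sq (T f) hN.compl hoff (by positivity)
    _ ≤ (lam * ‖f‖) ^ 2 := pow_le_pow_left₀ (norm_nonneg _) (hlam f hmean) 2
    _ = lam ^ 2 * (μ.real B * (1 - μ.real B)) := by rw [mul_pow, hf_norm]

/-- **Parzanchevski–Sarnak covering bound**: let `G` be a compact metrizable topological
group with a bi-invariant metric, `μ` the normalized Haar measure, `S` a finite nonempty
subset of `G`, `T` the operator `(T f)(g) = ∑_{s ∈ S} f(sg)` on `L²(G,μ)`, and `λ_S` the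
operator norm of the restriction of `T` to the mean-zero subspace. Then the
`ε`-neighborhood of `S` has measure at least `1 − λ_S²/(|S|²·μ(B_ε(1)))`. -/
theorem covering_bound
    {G : Type*} [Group G] [MetricSpace G] [CompactSpace G] [IsTopologicalGroup G]
    [MeasurableSpace G] [BorelSpace G]
    (hinvL : ∀ a x y : G, dist (a * x) (a * y) = dist x y)
    (hinvR : ∀ a x y : G, dist (x * a) (y * a) = dist x y)
    (μ : Measure G) [μ.IsHaarMeasure] [IsProbabilityMeasure μ]
    (S : Finset G) (hS : S.Nonempty)
    (T : Lp ℂ 2 μ →L[ℂ] Lp ℂ 2 μ)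
    (hT : ∀ f : Lp ℂ 2 μ, (T f : G → ℂ) =ᵐ[μ] fun g => ∑ s ∈ S, f (s * g))
    (lamS : ℝ)
    (hlamS : lamS = sSup {r : ℝ | ∃ f : Lp ℂ 2 μ,
      (∫ g, (f : G → ℂ) g ∂μ) = 0 ∧ ‖f‖ ≤ 1 ∧ r = ‖T f‖})
    (ε : ℝ) (hε : 0 < ε) :
    1 - lamS ^ 2 / ((S.card : ℝ) ^ 2 * (μ (Metric.ball (1 : G) ε)).toReal)
      ≤ (μ (⋃ s ∈ S, Metric.ball (s : G) ε)).toReal := by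
  have : IsIsometricSMul G G := ⟨fun a => Isometry.of_dist_eq (hinvL a)⟩
  have : IsIsometricSMul Gᵐᵒᵖ G := ⟨fun a => Isometry.of_dist_eq (hinvR a.unop)⟩
  have := μ.isInvInvariant_of_isProbabilityMeasure
  have hlam : ∀ f : Lp ℂ 2 μ, ∫ g, (f : G → ℂ) g ∂μ = 0 → ‖T f‖ ≤ lamS * ‖f‖ :=
    fun f hf => hlamS ▸ T.norm_apply_le_sSup_mul_norm (fun c u hu => by
      rw [integral_congr_ae (Lp.coeFn_smul c u), Pi.smul_def, integral_smul, hu, smul_zero]) hf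
  have key := sq_card_mul_measureReal_mul_measureReal_compl_le hT hlam
    (Metric.isOpen_ball (x := (1 : G)) (ε := ε)).measurableSet
  rw [probReal_compl_eq_one_sub (.biUnion S.countable_toSet fun s _ =>
    measurable_const_mul s Metric.isOpen_ball.measurableSet),
    measureReal_biUnion_preimage_mul_left_ball_one] at key
  simp only [Finset.mem_coe] at key
  have hβ : 0 < μ.real (Metric.ball (1 : G) ε) := ENNReal.toReal_pos
    (Metric.isOpen_ball.measure_ne_zero μ ⟨1, Metric.mem_ball_self hε⟩) (measure_ne_top μ _)
  have hcard : (0 : ℝ) < S.card := by exact_mod_cast hS.card_pos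
  simp only [← measureReal_def]
  rw [sub_le_comm, le_div_iff₀ (by positivity)]
  refine le_of_mul_le_mul_right ?_ hβ
  nlinarith [mul_nonneg (sq_nonneg lamS) (mul_pos hβ hβ).le]
end

section
/- Every finite connected k-regular Ramanujan graph X (k ≥ 3) on at least two vertices satisfies h(X) ≥ (k − 2√(k−1))/2, where h(X) is the Cheeger constant of X; in particular, Ramanujan graphs are expanders. -/
open Matrix Finset

open scoped InnerProductSpace

/-!
Test the Laplacian `L = k - A` on the vector `x = n 𝟙_Y - |Y|`, which is orthogonal to the
constants and satisfies `⟪x, L x⟫ = n² |E(Y, Yᶜ)|` and `‖x‖² = n |Y| (n - |Y|)`. The eigenvalue `k`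
of a connected `k`-regular graph has only constant eigenvectors, so on the orthogonal complement
of the constants the Ramanujan bound gives `⟪x, A x⟫ ≤ 2√(k-1) ‖x‖²`, i.e.
`n |E(Y, Yᶜ)| ≥ (k - 2√(k-1)) |Y| (n - |Y|) ≥ (k - 2√(k-1)) |Y| n / 2`.
-/

namespace LinearMap.IsSymmetric

variable {E : Type*} [NormedAddCommGroup E] [InnerProductSpace ℝ E] [FiniteDimensional ℝ E]
  {T : E →ₗ[ℝ] E}

theorem inner_apply_self_le_of_forall_eigenvector (hT : T.IsSymmetric) {c : ℝ} {x : E}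
    (hx : ∀ (μ : ℝ) (v : E), T v = μ • v → c < μ → ⟪v, x⟫_ℝ = 0) :
    ⟪T x, x⟫_ℝ ≤ c * ‖x‖ ^ 2 := by
  set b := hT.eigenvectorBasis rfl
  set μ := hT.eigenvalues rfl
  have hb : ∀ i, T (b i) = μ i • b i := hT.apply_eigenvectorBasis rfl
  have hTx : ⟪T x, x⟫_ℝ = ∑ i, μ i * ⟪b i, x⟫_ℝ ^ 2 := by
    rw [← b.sum_inner_mul_inner]
    refine sum_congr rfl fun i _ => ?_
    rw [hT, hb, real_inner_smul_right, real_inner_comm]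
    ring
  have hx2 : ‖x‖ ^ 2 = ∑ i, ⟪b i, x⟫_ℝ ^ 2 := by
    rw [← real_inner_self_eq_norm_sq, ← b.sum_inner_mul_inner]
    simp_rw [real_inner_comm x, sq]
  rw [hTx, hx2, mul_sum]
  refine sum_le_sum fun i _ => ?_
  rcases le_or_gt (μ i) c with h | h
  · exact mul_le_mul_of_nonneg_right h (sq_nonneg _)
  · simp [hx _ _ (hb i) h]

end LinearMap.IsSymmetric

theorem Matrix.IsHermitian.dotProduct_mulVec_le_of_forall_eigenvector {n : Type*} [Fintype n]
    [DecidableEq n] {A : Matrix n n ℝ} (hA : A.IsHermitian) {c : ℝ} {x : n → ℝ}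
    (hx : ∀ (μ : ℝ) (v : n → ℝ), A *ᵥ v = μ • v → c < μ → v ⬝ᵥ x = 0) :
    x ⬝ᵥ A *ᵥ x ≤ c * (x ⬝ᵥ x) := by
  have key := LinearMap.IsSymmetric.inner_apply_self_le_of_forall_eigenvector
    (isSymmetric_toEuclideanLin_iff.mpr hA) (x := WithLp.toLp 2 x) (c := c)
    fun μ v hv hμ => by
      rw [real_inner_comm]
      exact hx μ v (congrArg WithLp.ofLp hv) hμ
  rw [← real_inner_self_eq_norm_sq] at key
  exact key

theorem Fintype.sum_ite_mem_const {V : Type*} [Fintype V] [DecidableEq V] (Y : Finset V)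
    (a b : ℝ) : ∑ i, (if i ∈ Y then a else b) = #Y * a + (Fintype.card V - #Y) * b := by
  rw [Finset.sum_ite, filter_notMem_eq_sdiff]
  simp [card_univ_sdiff, Nat.cast_sub (card_le_univ Y)]

namespace SimpleGraph

variable {V : Type*} [Fintype V] [DecidableEq V] (G : SimpleGraph V) [DecidableRel G.Adj]
  {k : ℕ}

def edgeBoundary (Y : Finset V) : Finset (V × V) :=
  univ.filter fun p => p.1 ∈ Y ∧ p.2 ∉ Y ∧ G.Adj p.1 p.2

theorem card_edgeBoundary_eq_sum (Y : Finset V) :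
    (#(G.edgeBoundary Y) : ℝ) = ∑ i, ∑ j, if i ∈ Y ∧ j ∉ Y ∧ G.Adj i j then 1 else 0 := by
  rw [edgeBoundary, card_filter, Fintype.sum_prod_type]
  push_cast
  rfl

theorem dotProduct_lapMatrix_mulVec_ite (Y : Finset V) (a b : ℝ) :
    (fun i => if i ∈ Y then a else b) ⬝ᵥ G.lapMatrix ℝ *ᵥ (fun i => if i ∈ Y then a else b) =
      (a - b) ^ 2 * #(G.edgeBoundary Y) := by
  rw [← toLinearMap₂'_apply', lapMatrix_toLinearMap₂']
  have hterm : ∀ i j, (if G.Adj i j then ((if i ∈ Y then a else b) - (if j ∈ Y then a else b)) ^ 2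
      else 0) = (a - b) ^ 2 * ((if i ∈ Y ∧ j ∉ Y ∧ G.Adj i j then 1 else 0) +
        (if j ∈ Y ∧ i ∉ Y ∧ G.Adj j i then 1 else 0)) := by
    intro i j
    by_cases hi : i ∈ Y <;> by_cases hj : j ∈ Y <;> by_cases h : G.Adj i j <;>
      simp [hi, hj, h, G.adj_comm j i, sub_sq_comm b a]
  simp only [hterm, ← mul_sum, sum_add_distrib]
  rw [sum_comm (f := fun i j => if j ∈ Y ∧ i ∉ Y ∧ G.Adj j i then (1 : ℝ) else 0),
    ← card_edgeBoundary_eq_sum]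
  ring

variable {G}

theorem IsRegularOfDegree.dotProduct_lapMatrix_mulVec (hreg : G.IsRegularOfDegree k)
    (x : V → ℝ) : x ⬝ᵥ G.lapMatrix ℝ *ᵥ x = k * (x ⬝ᵥ x) - x ⬝ᵥ G.adjMatrix ℝ *ᵥ x := by
  rw [lapMatrix, sub_mulVec, dotProduct_sub, dotProduct_mulVec_degMatrix]
  simp only [hreg.degree_eq, dotProduct, mul_sum, mul_assoc]

theorem Connected.eq_of_adjMatrix_mulVec_eq_degree_smul (hconn : G.Connected)
    (hreg : G.IsRegularOfDegree k) {x : V → ℝ} (hx : G.adjMatrix ℝ *ᵥ x = (k : ℝ) • x)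
    (i j : V) : x i = x j := by
  have hlap : G.lapMatrix ℝ *ᵥ x = 0 := by
    ext v
    simp [lapMatrix, sub_mulVec, degMatrix_mulVec_apply, hreg.degree_eq, hx]
  exact (lapMatrix_mulVec_eq_zero_iff_forall_reachable G).mp hlap i j (hconn i j)

theorem Connected.mul_dotProduct_self_le_dotProduct_lapMatrix_mulVec (hconn : G.Connected)
    (hreg : G.IsRegularOfDegree k) {c : ℝ}
    (hc : ∀ μ : ℝ, (∃ x : V → ℝ, x ≠ 0 ∧ G.adjMatrix ℝ *ᵥ x = μ • x) → μ = k ∨ μ ≤ c)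
    {x : V → ℝ} (hx : ∑ i, x i = 0) :
    (k - c) * (x ⬝ᵥ x) ≤ x ⬝ᵥ G.lapMatrix ℝ *ᵥ x := by
  have hA : x ⬝ᵥ G.adjMatrix ℝ *ᵥ x ≤ c * (x ⬝ᵥ x) := by
    refine (isHermitian_adjMatrix ℝ G).dotProduct_mulVec_le_of_forall_eigenvector
      fun μ v hv hμ => ?_
    obtain rfl | hv0 := eq_or_ne v 0
    · exact zero_dotProduct x
    obtain rfl | hμc := hc μ ⟨v, hv0, hv⟩
    · obtain ⟨i⟩ := hconn.nonempty
      have hconst : v = fun _ => v i :=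
        funext fun j => hconn.eq_of_adjMatrix_mulVec_eq_degree_smul hreg hv j i
      rw [hconst]
      simp [dotProduct, ← mul_sum, hx]
    · exact absurd hμc (not_le.2 hμ)
  rw [hreg.dotProduct_lapMatrix_mulVec]
  linarith

theorem Connected.sub_div_two_le_card_edgeBoundary_div_card (hconn : G.Connected)
    (hreg : G.IsRegularOfDegree k) {c : ℝ}
    (hc : ∀ μ : ℝ, (∃ x : V → ℝ, x ≠ 0 ∧ G.adjMatrix ℝ *ᵥ x = μ • x) → μ = k ∨ μ ≤ c)
    {Y : Finset V} (hY : Y.Nonempty) (hYcard : 2 * #Y ≤ Fintype.card V) :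
    (k - c) / 2 ≤ #(G.edgeBoundary Y) / #Y := by
  set n : ℝ := (Fintype.card V : ℝ)
  set y : ℝ := (#Y : ℝ)
  set e : ℝ := (#(G.edgeBoundary Y) : ℝ)
  have hy : 0 < y := by simpa [y] using hY.card_pos
  have hyn : 2 * y ≤ n := by simp only [n, y]; exact_mod_cast hYcard
  have hn : 0 < n := by linarith
  have he : 0 ≤ e := Nat.cast_nonneg _
  set x : V → ℝ := fun i => if i ∈ Y then n - y else -y
  have hsum : ∑ i, x i = 0 := by
    rw [Fintype.sum_ite_mem_const]
    ring
  have hnorm : x ⬝ᵥ x = n * y * (n - y) := by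
    have : x ⬝ᵥ x = ∑ i, (if i ∈ Y then (n - y) * (n - y) else -y * -y) :=
      sum_congr rfl fun i _ => by simp only [x]; split_ifs <;> rfl
    rw [this, Fintype.sum_ite_mem_const]
    ring
  have hgap := hconn.mul_dotProduct_self_le_dotProduct_lapMatrix_mulVec hreg hc hsum
  rw [dotProduct_lapMatrix_mulVec_ite, hnorm, sub_neg_eq_add, sub_add_cancel] at hgap
  have hcut : (k - c) * y * (n - y) ≤ n * e :=
    le_of_mul_le_mul_left (by linarith) hn
  rw [div_le_div_iff₀ two_pos hy]
  rcases le_or_gt (k : ℝ) c with hkc | hkc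
  · nlinarith
  · have : (k - c) * y * n ≤ 2 * ((k - c) * y * (n - y)) := by
      nlinarith [mul_pos (sub_pos.2 hkc) hy]
    exact le_of_mul_le_mul_left (by linarith) hn

end SimpleGraph

theorem ramanujan_cheeger_lower_bound_general
    {V : Type*} [Fintype V] [DecidableEq V]
    (G : SimpleGraph V) [DecidableRel G.Adj]
    (k : ℕ)
    (hconn : G.Connected)
    (hreg : G.IsRegularOfDegree k)
    (hcard : 2 ≤ Fintype.card V)
    (hram : ∀ lam : ℝ, (∃ x : V → ℝ, x ≠ 0 ∧ G.adjMatrix ℝ *ᵥ x = lam • x) →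
      |lam| = (k : ℝ) ∨ |lam| ≤ 2 * Real.sqrt ((k : ℝ) - 1))
    (h : ℝ)
    (hh : h = sInf {r : ℝ | ∃ Y : Finset V, Y.Nonempty ∧ 2 * Y.card ≤ Fintype.card V ∧
      r = ((Finset.univ.filter
        (fun p : V × V => p.1 ∈ Y ∧ p.2 ∉ Y ∧ G.Adj p.1 p.2)).card : ℝ) / Y.card}) :
    ((k : ℝ) - 2 * Real.sqrt ((k : ℝ) - 1)) / 2 ≤ h := by
  have hc : ∀ μ : ℝ, (∃ x : V → ℝ, x ≠ 0 ∧ G.adjMatrix ℝ *ᵥ x = μ • x) →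
      μ = k ∨ μ ≤ 2 * Real.sqrt ((k : ℝ) - 1) := fun μ hμ => by
    have hk0 : -(k : ℝ) ≤ 2 * Real.sqrt ((k : ℝ) - 1) :=
      (neg_nonpos.2 k.cast_nonneg).trans (by positivity)
    rcases hram μ hμ with habs | habs
    · rcases (abs_eq (Nat.cast_nonneg k)).mp habs with rfl | rfl
      exacts [Or.inl rfl, Or.inr hk0]
    · exact Or.inr ((le_abs_self μ).trans habs)
  obtain ⟨v⟩ := hconn.nonempty
  rw [hh]
  refine le_csInf ⟨_, {v}, singleton_nonempty v, by simpa using hcard, rfl⟩ ?_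
  rintro r ⟨Y, hY, hYcard, rfl⟩
  exact hconn.sub_div_two_le_card_edgeBoundary_div_card hreg hc hY hYcard

/-- Every finite connected `k`-regular Ramanujan graph (`k ≥ 3`) on at least two vertices
has Cheeger constant at least `(k − 2√(k−1))/2`; in particular Ramanujan graphs are
expanders. -/
theorem ramanujan_cheeger_lower_bound
    {V : Type*} [Fintype V] [DecidableEq V]
    (G : SimpleGraph V) [DecidableRel G.Adj]
    (k : ℕ) (hk : 3 ≤ k)
    (hconn : G.Connected)
    (hreg : G.IsRegularOfDegree k)
    (hcard : 2 ≤ Fintype.card V)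
    (hram : ∀ lam : ℝ, (∃ x : V → ℝ, x ≠ 0 ∧ G.adjMatrix ℝ *ᵥ x = lam • x) →
      |lam| = (k : ℝ) ∨ |lam| ≤ 2 * Real.sqrt ((k : ℝ) - 1))
    (h : ℝ)
    (hh : h = sInf {r : ℝ | ∃ Y : Finset V, Y.Nonempty ∧ 2 * Y.card ≤ Fintype.card V ∧
      r = ((Finset.univ.filter
        (fun p : V × V => p.1 ∈ Y ∧ p.2 ∉ Y ∧ G.Adj p.1 p.2)).card : ℝ) / Y.card}) :
    ((k : ℝ) - 2 * Real.sqrt ((k : ℝ) - 1)) / 2 ≤ h :=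
  ramanujan_cheeger_lower_bound_general G k hconn hreg hcard hram h hh
end
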